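/- Let A₁₂ = {(φ,ξ) ∈ (-π/2,π/2) × [0,1] : -tan φ < ξ < 1 - tan φ}. Then (3/8) ∫∫_{A₁₂} 2 cos φ dφ dξ = (3/2)(√2 - 1). -/

import Mathlib

/-!
For fixed `φ` with `|φ| < π/2`, the `ξ`-slice of `A₁₂` is `[0, 1] ∩ (-tan φ, 1 - tan φ)`, of length
`max (1 - |tan φ|) 0`. This is positive exactly for `|φ| < π/4`, and there
`2 cos φ (1 - |tan φ|) = 2 cos φ - 2 |sin φ|`. By Fubini the double integral is therefore
`∫_{-π/4}^{π/4} (2 cos φ - 2 |sin φ|) dφ = 2√2 - 2 (2 - √2) = 4 (√2 - 1)`.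
-/

open Real MeasureTheory Set

lemma Real.measurable_tan : Measurable tan := by
  rw [show tan = fun x ↦ sin x / cos x from funext tan_eq_sin_div_cos]
  exact measurable_sin.div measurable_cos

lemma volume_Icc_inter_Ioo (a b c d : ℝ) :
    volume (Icc a b ∩ Ioo c d) = ENNReal.ofReal (min b d - max a c) := by
  rw [measure_congr (μ := volume) (ae_eq_set_inter (ae_eq_refl (Icc a b))
    (Ioo_ae_eq_Icc (a := c) (b := d))), Icc_inter_Icc, Real.volume_Icc]

lemma measureReal_Icc_inter_Ioo_neg (t : ℝ) :
    volume.real (Icc 0 1 ∩ Ioo (-t) (1 - t)) = max (1 - |t|) 0 := by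
  rw [measureReal_def, volume_Icc_inter_Ioo, ENNReal.toReal_ofReal']
  congr 1
  rcases le_total 0 t with ht | ht
  · rw [min_eq_right (by linarith), max_eq_left (by linarith), abs_of_nonneg ht, sub_zero]
  · rw [min_eq_left (by linarith), max_eq_right (by linarith), abs_of_nonpos ht]

lemma abs_tan_lt_one_iff {x : ℝ} (hx : x ∈ Ioo (-(π / 2)) (π / 2)) :
    |tan x| < 1 ↔ x ∈ Ioo (-(π / 4)) (π / 4) :=
  calc |tan x| < 1 ↔ arctan (-1) < arctan (tan x) ∧ arctan (tan x) < arctan 1 := by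
        rw [abs_lt, arctan_strictMono.lt_iff_lt, arctan_strictMono.lt_iff_lt]
    _ ↔ x ∈ Ioo (-(π / 4)) (π / 4) := by
        rw [arctan_tan hx.1 hx.2, arctan_neg, arctan_one, mem_Ioo]

lemma two_cos_mul_max_one_sub_abs_tan {x : ℝ} (hx : x ∈ Ioo (-(π / 2)) (π / 2)) :
    2 * cos x * max (1 - |tan x|) 0 =
      (Ioo (-(π / 4)) (π / 4)).indicator (fun x ↦ 2 * cos x - 2 * |sin x|) x := by
  by_cases hJ : x ∈ Ioo (-(π / 4)) (π / 4)
  · have hcos := cos_pos_of_mem_Ioo hx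
    have habs : |sin x| = |tan x| * cos x := by
      rw [tan_eq_sin_div_cos, abs_div, abs_of_pos hcos, div_mul_cancel₀ _ hcos.ne']
    rw [indicator_of_mem hJ, habs, max_eq_left (sub_nonneg.2 ((abs_tan_lt_one_iff hx).2 hJ).le)]
    ring
  · have hge : 1 ≤ |tan x| := not_lt.1 (mt (abs_tan_lt_one_iff hx).1 hJ)
    rw [indicator_of_notMem hJ, max_eq_right (by linarith), mul_zero]

lemma integral_abs_sin_neg_self {a : ℝ} (ha : 0 ≤ a) (haπ : a ≤ π) :
    ∫ x in -a..a, |sin x| = 2 * (1 - cos a) := by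
  have hint : ∀ b c : ℝ, IntervalIntegrable (fun x ↦ |sin x|) volume b c :=
    fun _ _ ↦ continuous_sin.abs.intervalIntegrable _ _
  have hpos : ∫ x in (0 : ℝ)..a, |sin x| = 1 - cos a := by
    rw [intervalIntegral.integral_congr (g := sin) fun x hx ↦ ?_, integral_sin, cos_zero]
    rw [uIcc_of_le ha] at hx
    exact abs_of_nonneg (sin_nonneg_of_nonneg_of_le_pi hx.1 (hx.2.trans haπ))
  have hneg : ∫ x in -a..0, |sin x| = ∫ x in (0 : ℝ)..a, |sin x| := by
    simpa [sin_neg, abs_neg] using (intervalIntegral.integral_comp_neg (a := 0) (b := a)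
      fun x ↦ |sin x|).symm
  rw [← intervalIntegral.integral_add_adjacent_intervals (hint (-a) 0) (hint 0 a), hneg, hpos]
  ring

/-- The set `A₁₂`. -/
def doubleReflectionSet : Set (ℝ × ℝ) :=
  {p | p.1 ∈ Ioo (-(π / 2)) (π / 2) ∧ p.2 ∈ Icc 0 1 ∧ -tan p.1 < p.2 ∧ p.2 < 1 - tan p.1}

lemma measurableSet_doubleReflectionSet : MeasurableSet doubleReflectionSet := by
  have htan : Measurable fun p : ℝ × ℝ ↦ tan p.1 := measurable_tan.comp measurable_fst
  exact (measurableSet_Ioo.preimage measurable_fst).inter <|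
    (measurableSet_Icc.preimage measurable_snd).inter <|
      (measurableSet_lt htan.neg measurable_snd).inter
        (measurableSet_lt measurable_snd (measurable_const.sub htan))

lemma doubleReflectionSet_subset : doubleReflectionSet ⊆ Icc (-(π / 2)) (π / 2) ×ˢ Icc 0 1 :=
  fun _ ⟨hx, hy, _⟩ ↦ ⟨Ioo_subset_Icc_self hx, hy⟩

lemma integral_indicator_doubleReflectionSet_slice (x : ℝ) :
    ∫ y, doubleReflectionSet.indicator (fun p ↦ 2 * cos p.1) (x, y) =
      (Ioo (-(π / 4)) (π / 4)).indicator (fun x ↦ 2 * cos x - 2 * |sin x|) x := by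
  by_cases hx : x ∈ Ioo (-(π / 2)) (π / 2)
  · have hslice : (fun y ↦ doubleReflectionSet.indicator (fun p ↦ 2 * cos p.1) (x, y)) =
        (Icc 0 1 ∩ Ioo (-tan x) (1 - tan x)).indicator fun _ ↦ 2 * cos x := by
      ext y
      simp only [indicator_apply, doubleReflectionSet, mem_ofPred_eq, mem_inter_iff, mem_Ioo, hx.1,
        hx.2, and_self, true_and]
    rw [hslice, integral_indicator_const _ (measurableSet_Icc.inter measurableSet_Ioo),
      measureReal_Icc_inter_Ioo_neg, smul_eq_mul, mul_comm, two_cos_mul_max_one_sub_abs_tan hx]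
  · have hJ : x ∉ Ioo (-(π / 4)) (π / 4) := fun hJ ↦
      hx ⟨by linarith [hJ.1, pi_pos], by linarith [hJ.2, pi_pos]⟩
    simp only [indicator_of_notMem hJ, indicator_apply, doubleReflectionSet, mem_ofPred_eq, hx,
      false_and, if_false, integral_zero]

theorem triangle_double_reflection_contribution :
    (3/8 : ℝ) * ∫ p in {p : ℝ × ℝ | p.1 ∈ Set.Ioo (-(π/2)) (π/2) ∧
        p.2 ∈ Set.Icc (0:ℝ) 1 ∧ -Real.tan p.1 < p.2 ∧ p.2 < 1 - Real.tan p.1},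
      2 * Real.cos p.1 = (3/2) * (Real.sqrt 2 - 1) := by
  change (3 / 8 : ℝ) * ∫ p in doubleReflectionSet, 2 * cos p.1 = _
  have hint : IntegrableOn (fun p : ℝ × ℝ ↦ 2 * cos p.1) doubleReflectionSet :=
    ((by fun_prop : Continuous fun p : ℝ × ℝ ↦ 2 * cos p.1).continuousOn.integrableOn_compact
      (isCompact_Icc.prod isCompact_Icc)).mono_set doubleReflectionSet_subset
  have hπ : -(π / 4) ≤ π / 4 := by linarith [pi_pos]
  calc (3 / 8 : ℝ) * ∫ p in doubleReflectionSet, 2 * cos p.1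
      = 3 / 8 * ∫ x in -(π / 4)..π / 4, (2 * cos x - 2 * |sin x|) := by
        rw [← integral_indicator measurableSet_doubleReflectionSet, Measure.volume_eq_prod,
          integral_prod _ ((integrable_indicator_iff measurableSet_doubleReflectionSet).2 hint)]
        simp only [integral_indicator_doubleReflectionSet_slice,
          integral_indicator measurableSet_Ioo, intervalIntegral.integral_of_le hπ,
          integral_Ioc_eq_integral_Ioo]
    _ = 3 / 8 * (2 * (2 * sin (π / 4)) - 2 * (2 * (1 - cos (π / 4)))) := by
        rw [intervalIntegral.integral_sub (f := fun x ↦ 2 * cos x) (g := fun x ↦ 2 * |sin x|)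
          ((by fun_prop : Continuous fun x ↦ 2 * cos x).intervalIntegrable _ _)
          ((by fun_prop : Continuous fun x ↦ 2 * |sin x|).intervalIntegrable _ _),
          intervalIntegral.integral_const_mul, intervalIntegral.integral_const_mul, integral_cos,
          integral_abs_sin_neg_self (by linarith [pi_pos]) (by linarith [pi_pos]), sin_neg]
        ring
    _ = 3 / 2 * (√2 - 1) := by
        rw [sin_pi_div_four, cos_pi_div_four]
        ring
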